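/- arXiv:1605.02222 — 6 statements merged into one kernel-verified Lean document; each statement's English description precedes it below -/
import Mathlib

section
/- For the friendship graph F_n (n ≥ 2), the total domination polynomial satisfies D_t(F_n, x) = x(x+1)^{2n} + x^{2n} - x. -/
/-- `D` is a total dominating set of `G`: every vertex has a neighbor in `D`. -/
def IsTotalDomSet {V : Type*} (G : SimpleGraph V) (D : Finset V) : Prop :=
  ∀ v : V, ∃ u ∈ D, G.Adj v u

/-- `dt G i` is the number of total dominating sets of `G` of cardinality `i`. -/
noncomputable def dt {V : Type*} [Fintype V] (G : SimpleGraph V) (i : ℕ) : ℕ :=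
  Nat.card {D : Finset V // D.card = i ∧ IsTotalDomSet G D}

/-- The total domination polynomial of `G`, as a real function. -/
noncomputable def Dt {V : Type*} [Fintype V] (G : SimpleGraph V) (x : ℝ) : ℝ :=
  ∑ i ∈ Finset.range (Fintype.card V + 1), (dt G i : ℝ) * x ^ i

/-- The total domination number of `G`. -/
noncomputable def gammaT {V : Type*} (G : SimpleGraph V) : ℕ :=
  sInf {k : ℕ | ∃ D : Finset V, D.card = k ∧ IsTotalDomSet G D}

/-- The friendship graph `F n`: `n` triangles glued at the common vertex `0`.
For `1 ≤ i ≤ 2n`, vertices `2k+1` and `2k+2` form a triangle with `0`. -/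
def friendshipGraph (n : ℕ) : SimpleGraph (Fin (2 * n + 1)) :=
  SimpleGraph.fromRel (fun a b => a = 0 ∨ b = 0 ∨ (a.val + 1) / 2 = (b.val + 1) / 2)

/-! The centre `0` is adjacent to every other vertex, so a set containing `0` is a total dominating
set exactly when it contains some leaf. A set avoiding `0` must contain every leaf `v`, because the
only neighbours of the other leaf of `v`'s triangle are `0` and `v`; and the set of all leaves does
totally dominate. The sets `insert 0 S` with `S` a nonempty set of leaves contribute
`x ((x + 1) ^ (2 n) - 1)`, the set of all leaves contributes `x ^ (2 n)`. -/

open Finset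

open Classical in
theorem Dt_eq_sum {V : Type*} [Fintype V] (G : SimpleGraph V) (x : ℝ) :
    Dt G x = ∑ D : Finset V, if IsTotalDomSet G D then x ^ D.card else 0 := by
  have hcard : ∀ D : Finset V, D.card ∈ range (Fintype.card V + 1) := fun D =>
    mem_range_succ_iff.mpr (card_le_univ D)
  rw [Dt, ← sum_fiberwise_of_maps_to (fun D _ => hcard D)]
  refine sum_congr rfl fun i _ => ?_
  rw [dt, Nat.card_eq_fintype_card, Fintype.card_subtype, ← sum_filter, filter_filter,
    sum_congr rfl fun D hD => by rw [(mem_filter.1 hD).2.1], sum_const, nsmul_eq_mul]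

theorem friendshipGraph_adj {n : ℕ} {a b : Fin (2 * n + 1)} :
    (friendshipGraph n).Adj a b ↔
      a ≠ b ∧ (a = 0 ∨ b = 0 ∨ (a.val + 1) / 2 = (b.val + 1) / 2) := by
  simp only [friendshipGraph, SimpleGraph.fromRel_adj]
  grind

theorem isTotalDomSet_insert_iff {V : Type*} [DecidableEq V] {G : SimpleGraph V} {c : V}
    (hc : ∀ v ≠ c, G.Adj v c) {S : Finset V} :
    IsTotalDomSet G (insert c S) ↔ ∃ v ∈ S, v ≠ c := by
  constructor
  · intro hD
    obtain ⟨u, hu, hcu⟩ := hD c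
    exact ⟨u, (mem_insert.1 hu).resolve_left hcu.ne', hcu.ne'⟩
  · rintro ⟨w, hw, hwc⟩ v
    by_cases hv : v = c
    · exact ⟨w, mem_insert_of_mem hw, hv ▸ (hc w hwc).symm⟩
    · exact ⟨c, mem_insert_self c S, hc v hv⟩

theorem friendshipGraph_adj_zero {n : ℕ} {v : Fin (2 * n + 1)} (hv : v ≠ 0) :
    (friendshipGraph n).Adj v 0 :=
  friendshipGraph_adj.2 ⟨hv, Or.inr (Or.inl rfl)⟩

theorem friendshipGraph_exists_partner {n : ℕ} {v : Fin (2 * n + 1)} (hv : v ≠ 0) :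
    ∃ w ≠ 0, (friendshipGraph n).Adj v w ∧
      ∀ u ≠ 0, (friendshipGraph n).Adj w u → u = v := by
  have hv2 := v.isLt
  refine ⟨⟨if v.val % 2 = 1 then v.val + 1 else v.val - 1, by split <;> omega⟩, ?_⟩
  simp only [friendshipGraph_adj, Ne, Fin.ext_iff, Fin.val_zero] at hv ⊢
  refine ⟨?_, ?_, fun u hu => ?_⟩ <;> split <;> omega

theorem friendshipGraph_isTotalDomSet_iff_of_zero_notMem {n : ℕ} (hn : 1 ≤ n)
    {D : Finset (Fin (2 * n + 1))} (h0 : 0 ∉ D) :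
    IsTotalDomSet (friendshipGraph n) D ↔ D = univ.erase 0 := by
  constructor
  · intro hD
    ext v
    simp only [mem_erase, mem_univ, and_true]
    refine ⟨fun hv h => h0 (h ▸ hv), fun hv => ?_⟩
    obtain ⟨w, -, -, hw⟩ := friendshipGraph_exists_partner hv
    obtain ⟨u, hu, hwu⟩ := hD w
    exact hw u (ne_of_mem_of_not_mem hu h0) hwu ▸ hu
  · rintro rfl v
    by_cases hv : v = 0
    · exact ⟨⟨1, by omega⟩, by simp [Fin.ext_iff],
        by simp [hv, friendshipGraph_adj, Fin.ext_iff]⟩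
    · obtain ⟨w, hw0, hvw, -⟩ := friendshipGraph_exists_partner hv
      exact ⟨w, mem_erase.2 ⟨hw0, mem_univ w⟩, hvw⟩

theorem sum_powerset_ite_nonempty {α R : Type*} [DecidableEq α] [CommRing R] (t : Finset α)
    (x : R) :
    ∑ S ∈ t.powerset, (if S.Nonempty then x ^ (S.card + 1) else 0) =
      x * ((x + 1) ^ t.card - 1) := by
  have h := sum_pow_mul_eq_add_pow x 1 t
  simp only [one_pow, mul_one] at h
  have hterm : ∀ S : Finset α, (if S.Nonempty then x ^ (S.card + 1) else 0)
      = x * x ^ S.card - if ∅ = S then x else 0 := by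
    intro S
    rcases S.eq_empty_or_nonempty with rfl | hS
    · simp
    · simp [hS, hS.ne_empty.symm, pow_succ']
  rw [← h, mul_sub, mul_sum, mul_one, sum_congr rfl fun S _ => hterm S, sum_sub_distrib,
    sum_ite_eq _ _ (fun _ => x), if_pos (empty_mem_powerset t)]

theorem card_univ_erase_zero (n : ℕ) : (univ.erase (0 : Fin (2 * n + 1))).card = 2 * n := by
  simp

open Classical in
theorem friendshipGraph_sum_powerset_leaves {n : ℕ} (hn : 1 ≤ n) (x : ℝ) :
    ∑ S ∈ (univ.erase (0 : Fin (2 * n + 1))).powerset,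
      (if IsTotalDomSet (friendshipGraph n) S then x ^ S.card else 0) = x ^ (2 * n) := by
  set leaves : Finset (Fin (2 * n + 1)) := univ.erase 0
  have hiff : ∀ S ∈ leaves.powerset, IsTotalDomSet (friendshipGraph n) S ↔ S = leaves :=
    fun S hS => friendshipGraph_isTotalDomSet_iff_of_zero_notMem hn
      fun h => notMem_erase 0 univ (mem_powerset.1 hS h)
  rw [sum_eq_single_of_mem leaves (mem_powerset_self leaves)
    fun S hS hne => if_neg (mt (hiff S hS).1 hne),
    if_pos ((hiff leaves (mem_powerset_self leaves)).2 rfl), card_univ_erase_zero]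

open Classical in
theorem friendshipGraph_sum_powerset_insert_zero (n : ℕ) (x : ℝ) :
    ∑ S ∈ (univ.erase (0 : Fin (2 * n + 1))).powerset,
      (if IsTotalDomSet (friendshipGraph n) (insert 0 S) then x ^ (insert 0 S).card else 0) =
      x * ((x + 1) ^ (2 * n) - 1) := by
  have hsum := sum_powerset_ite_nonempty (univ.erase (0 : Fin (2 * n + 1))) x
  rw [card_univ_erase_zero] at hsum
  rw [← hsum]
  refine sum_congr rfl fun S hS => ?_
  have h0S : 0 ∉ S := fun h => notMem_erase 0 univ (mem_powerset.1 hS h)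
  rw [isTotalDomSet_insert_iff fun _ => friendshipGraph_adj_zero, card_insert_of_notMem h0S]
  congr 1
  exact propext
    ⟨fun ⟨v, hv, _⟩ => ⟨v, hv⟩, fun ⟨v, hv⟩ => ⟨v, hv, ne_of_mem_of_not_mem hv h0S⟩⟩

theorem friendship_total_domination_polynomial (n : ℕ) (hn : 2 ≤ n) (x : ℝ) :
    Dt (friendshipGraph n) x = x * (x + 1) ^ (2 * n) + x ^ (2 * n) - x := by
  classical
  rw [Dt_eq_sum, ← powerset_univ, ← insert_erase (mem_univ 0),
    sum_powerset_insert (notMem_erase 0 univ), friendshipGraph_sum_powerset_leaves (by omega),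
    friendshipGraph_sum_powerset_insert_zero]
  ring
end

section
/- For every n ≥ 2 and every k with 2 ≤ k ≤ 2n−1, the number of total dominating sets of the friendship graph F_n of size k equals C(2n, k−1), and every subset of size ≥ 2n is a total dominating set. -/
lemma adj_iff (n : ℕ) (a b : Fin (2*n+1)) :
    (friendshipGraph n).Adj a b ↔
      a.val ≠ b.val ∧ (a.val = 0 ∨ b.val = 0 ∨ (a.val+1)/2 = (b.val+1)/2) := by
  simp only [friendshipGraph, SimpleGraph.fromRel_adj, ne_eq, Fin.ext_iff, Fin.val_zero]
  constructor
  · rintro ⟨h1, h2⟩; exact ⟨h1, by omega⟩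
  · rintro ⟨h1, h2⟩; exact ⟨h1, by omega⟩

lemma tds_iff (n : ℕ) (hn : 1 ≤ n) (D : Finset (Fin (2*n+1))) :
    IsTotalDomSet (friendshipGraph n) D ↔
      ((∃ v ∈ D, v.val ≠ 0) ∧
        ((0 : Fin (2*n+1)) ∈ D ∨ ∀ v : Fin (2*n+1), v.val ≠ 0 → v ∈ D)) := by
  constructor
  · intro h
    obtain ⟨u, hu, hadj⟩ := h 0
    rw [adj_iff] at hadj
    have h0v : (0 : Fin (2*n+1)).val = 0 := rfl
    have hu0 : u.val ≠ 0 := by omega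
    refine ⟨⟨u, hu, hu0⟩, ?_⟩
    by_cases h0 : (0 : Fin (2*n+1)) ∈ D
    · exact Or.inl h0
    · refine Or.inr fun v hv => ?_
      have hvlt := v.isLt
      obtain ⟨m, hm1, hm2, hm3, hm4⟩ :
          ∃ m, 1 ≤ m ∧ m ≤ 2*n ∧ m ≠ v.val ∧ (m+1)/2 = (v.val+1)/2 := by
        by_cases hp : v.val % 2 = 1
        · exact ⟨v.val + 1, by omega, by omega, by omega, by omega⟩
        · exact ⟨v.val - 1, by omega, by omega, by omega, by omega⟩
      obtain ⟨w, hw, hadjw⟩ := h ⟨m, by omega⟩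
      rw [adj_iff] at hadjw
      have hw0 : w.val ≠ 0 := by
        intro hz
        exact h0 (by rwa [show w = 0 from Fin.ext hz] at hw)
      have hwv : w = v := Fin.ext (by simp only [Fin.val_mk] at hadjw; omega)
      rwa [hwv] at hw
  · rintro ⟨⟨u, hu, hu0⟩, hcase⟩ v
    have hvlt := v.isLt
    have hult := u.isLt
    have h0v : (0 : Fin (2*n+1)).val = 0 := rfl
    rcases hcase with h0 | hall
    · by_cases hv0 : v.val = 0
      · exact ⟨u, hu, by rw [adj_iff]; omega⟩
      · exact ⟨0, h0, by rw [adj_iff]; omega⟩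
    · by_cases hv0 : v.val = 0
      · refine ⟨⟨1, by omega⟩, hall _ (by simp), ?_⟩
        rw [adj_iff]; simp only [Fin.val_mk]; omega
      · obtain ⟨m, hm1, hm2, hm3, hm4⟩ :
            ∃ m, 1 ≤ m ∧ m ≤ 2*n ∧ m ≠ v.val ∧ (m+1)/2 = (v.val+1)/2 := by
          by_cases hp : v.val % 2 = 1
          · exact ⟨v.val + 1, by omega, by omega, by omega, by omega⟩
          · exact ⟨v.val - 1, by omega, by omega, by omega, by omega⟩
        refine ⟨⟨m, by omega⟩, hall _ (by simp; omega), ?_⟩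
        rw [adj_iff]; simp only [Fin.val_mk]; omega

theorem friendship_dt_counts (n : ℕ) (hn : 2 ≤ n) :
    (∀ k : ℕ, 2 ≤ k → k ≤ 2 * n - 1 →
      dt (friendshipGraph n) k = Nat.choose (2 * n) (k - 1)) ∧
    (∀ D : Finset (Fin (2 * n + 1)), 2 * n ≤ D.card →
      IsTotalDomSet (friendshipGraph n) D) := by
  classical
  have hn1 : 1 ≤ n := by omega
  have hcard_erase : (Finset.univ.erase (0 : Fin (2*n+1))).card = 2*n := by
    rw [Finset.card_erase_of_mem (Finset.mem_univ _), Finset.card_univ, Fintype.card_fin]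
    omega
  constructor
  · intro k hk2 hk
    -- dt as a filter card
    have hdt : dt (friendshipGraph n) k =
        (Finset.univ.filter
          (fun D : Finset (Fin (2*n+1)) =>
            D.card = k ∧ IsTotalDomSet (friendshipGraph n) D)).card := by
      rw [dt, Nat.card_eq_fintype_card, Fintype.card_subtype]
    rw [hdt]
    -- the predicate simplifies to: card = k ∧ 0 ∈ D
    have hfilter : Finset.univ.filter
          (fun D : Finset (Fin (2*n+1)) =>
            D.card = k ∧ IsTotalDomSet (friendshipGraph n) D) =
        Finset.univ.filter
          (fun D : Finset (Fin (2*n+1)) => D.card = k ∧ (0 : Fin (2*n+1)) ∈ D) := by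
      apply Finset.filter_congr
      intro D _
      simp only [tds_iff n hn1]
      constructor
      · rintro ⟨hDk, _, h0 | hall⟩
        · exact ⟨hDk, h0⟩
        · exfalso
          have hsub : Finset.univ.erase (0 : Fin (2*n+1)) ⊆ D := by
            intro v hv
            exact hall v (fun h => (Finset.mem_erase.1 hv).1 (Fin.ext h))
          have := Finset.card_le_card hsub
          omega
      · rintro ⟨hDk, h0⟩
        refine ⟨hDk, ?_, Or.inl h0⟩
        have hne : (D.erase 0).Nonempty := by
          rw [← Finset.card_pos, Finset.card_erase_of_mem h0]
          omega
        obtain ⟨v, hv⟩ := hne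
        exact ⟨v, Finset.mem_of_mem_erase hv,
          fun h => (Finset.mem_erase.1 hv).1 (Fin.ext h)⟩
    rw [hfilter]
    -- bijection with powersetCard (k-1) of univ.erase 0
    have hbij : (Finset.univ.filter
          (fun D : Finset (Fin (2*n+1)) => D.card = k ∧ (0 : Fin (2*n+1)) ∈ D)).card =
        ((Finset.univ.erase (0 : Fin (2*n+1))).powersetCard (k-1)).card := by
      apply Finset.card_bij' (fun D _ => D.erase 0) (fun A _ => insert 0 A)
      case hi =>
        intro D hD
        simp only [Finset.mem_filter] at hD
        rw [Finset.mem_powersetCard]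
        exact ⟨Finset.erase_subset_erase _ (Finset.subset_univ _),
          by rw [Finset.card_erase_of_mem hD.2.2, hD.2.1]⟩
      case hj =>
        intro A hA
        rw [Finset.mem_powersetCard] at hA
        have h0A : (0 : Fin (2*n+1)) ∉ A := fun h =>
          (Finset.mem_erase.1 (hA.1 h)).1 rfl
        simp only [Finset.mem_filter]
        exact ⟨Finset.mem_univ _,
          by rw [Finset.card_insert_of_notMem h0A, hA.2]; omega,
          Finset.mem_insert_self _ _⟩
      case left_inv =>
        intro D hD
        simp only [Finset.mem_filter] at hD
        exact Finset.insert_erase hD.2.2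
      case right_inv =>
        intro A hA
        rw [Finset.mem_powersetCard] at hA
        exact Finset.erase_insert (fun h => (Finset.mem_erase.1 (hA.1 h)).1 rfl)
    rw [hbij, Finset.card_powersetCard, hcard_erase]
  · intro D hD
    rw [tds_iff n hn1]
    by_cases h0 : (0 : Fin (2*n+1)) ∈ D
    · have hne : (D.erase 0).Nonempty := by
        rw [← Finset.card_pos, Finset.card_erase_of_mem h0]
        omega
      obtain ⟨v, hv⟩ := hne
      exact ⟨⟨v, Finset.mem_of_mem_erase hv,
        fun h => (Finset.mem_erase.1 hv).1 (Fin.ext h)⟩, Or.inl h0⟩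
    · have hsub : D ⊆ Finset.univ.erase (0 : Fin (2*n+1)) := by
        intro v hv
        exact Finset.mem_erase.2 ⟨fun h => h0 (h ▸ hv), Finset.mem_univ _⟩
      have hDeq : D = Finset.univ.erase (0 : Fin (2*n+1)) :=
        Finset.eq_of_subset_of_card_le hsub (by omega)
      have hall : ∀ v : Fin (2*n+1), v.val ≠ 0 → v ∈ D := by
        intro v hv
        rw [hDeq]
        exact Finset.mem_erase.2 ⟨fun h => hv (congrArg Fin.val h), Finset.mem_univ _⟩
      exact ⟨⟨⟨1, by omega⟩, hall _ (by simp), by simp⟩, Or.inr hall⟩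
end

section
/- Let G be a graph of order n. Then for every i with 0 ≤ i < n/2, the number of total dominating sets satisfies d_t(G, i) ≤ d_t(G, i+1). -/
theorem dt_increasing_below_half {V : Type*} [Fintype V] (G : SimpleGraph V)
    (i : ℕ) (hi : 2 * i < Fintype.card V) :
    dt G i ≤ dt G (i + 1) := by
  classical
  have hs : dt G i
      = (Finset.univ.filter fun D : Finset V => D.card = i ∧ IsTotalDomSet G D).card := by
    rw [dt, Nat.card_eq_fintype_card, Fintype.card_subtype]
  have ht : dt G (i + 1)
      = (Finset.univ.filter fun D : Finset V => D.card = i + 1 ∧ IsTotalDomSet G D).card := by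
    rw [dt, Nat.card_eq_fintype_card, Fintype.card_subtype]
  rw [hs, ht]
  set s := Finset.univ.filter fun D : Finset V => D.card = i ∧ IsTotalDomSet G D with hsdef
  set t := Finset.univ.filter fun D : Finset V => D.card = i + 1 ∧ IsTotalDomSet G D with htdef
  have key : s.card * (i + 1) ≤ t.card * (i + 1) := by
    apply Finset.card_mul_le_card_mul (fun D E => D ⊆ E)
    · intro D hD
      rw [hsdef, Finset.mem_filter] at hD
      obtain ⟨-, hcard, hdom⟩ := hD
      have hsub : (Finset.univ \ D).image (fun v => insert v D)
          ⊆ t.bipartiteAbove (fun D E => D ⊆ E) D := by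
        intro E hE
        rw [Finset.mem_image] at hE
        obtain ⟨v, hv, rfl⟩ := hE
        rw [Finset.mem_sdiff] at hv
        rw [Finset.mem_bipartiteAbove, htdef, Finset.mem_filter]
        refine ⟨⟨Finset.mem_univ _, ?_, ?_⟩, Finset.subset_insert _ _⟩
        · rw [Finset.card_insert_of_notMem hv.2, hcard]
        · intro w
          obtain ⟨u, hu, hadj⟩ := hdom w
          exact ⟨u, Finset.mem_insert_of_mem hu, hadj⟩
      have hinj : Set.InjOn (fun v => insert v D) (Finset.univ \ D : Finset V) := by
        intro a ha b hb hab
        simp only [Finset.coe_sdiff, Set.mem_diff, Finset.mem_coe] at ha hb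
        simp only [] at hab
        have : a ∈ insert b D := hab ▸ Finset.mem_insert_self a D
        rcases Finset.mem_insert.mp this with h | h
        · exact h
        · exact absurd h ha.2
      have hcard2 : ((Finset.univ \ D).image (fun v => insert v D)).card
          = Fintype.card V - i := by
        rw [Finset.card_image_of_injOn hinj,
          Finset.card_sdiff_of_subset (Finset.subset_univ _), Finset.card_univ, hcard]
      calc i + 1 ≤ Fintype.card V - i := by omega
        _ = ((Finset.univ \ D).image (fun v => insert v D)).card := hcard2.symm
        _ ≤ (t.bipartiteAbove (fun D E => D ⊆ E) D).card := Finset.card_le_card hsub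
    · intro E hE
      rw [htdef, Finset.mem_filter] at hE
      have hsub : s.bipartiteBelow (fun D E => D ⊆ E) E ⊆ E.powersetCard i := by
        intro D hD
        rw [Finset.mem_bipartiteBelow] at hD
        rw [hsdef, Finset.mem_filter] at hD
        rw [Finset.mem_powersetCard]
        exact ⟨hD.2, hD.1.2.1⟩
      calc (s.bipartiteBelow (fun D E => D ⊆ E) E).card
          ≤ (E.powersetCard i).card := Finset.card_le_card hsub
        _ = (i + 1).choose i := by rw [Finset.card_powersetCard, hE.2.1]
        _ = i + 1 := Nat.choose_succ_self_right i
  exact Nat.le_of_mul_le_mul_right key (by omega)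
end

section
/- For any graph G = (V, E) of order n, the total domination polynomial satisfies D_t(G, x) = Σ_{S ⊆ V} (−1)^{|S|} (x+1)^{n − |N(S)|}, where N(S) is the open neighborhood of S. -/
open Finset

lemma sum_powerset_neg_one_real {α : Type*} [DecidableEq α] (A : Finset α) :
    (∑ S ∈ A.powerset, (-1 : ℝ) ^ S.card) = if A = ∅ then 1 else 0 := by
  have := @Finset.sum_powerset_neg_one_pow_card α _ A
  have : ((∑ m ∈ A.powerset, (-1 : ℤ) ^ m.card : ℤ) : ℝ)
      = ((if A = ∅ then 1 else 0 : ℤ) : ℝ) := by rw [this]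
  push_cast at this
  simpa using this

lemma sum_powerset_pow {α : Type*} (A : Finset α) (x : ℝ) :
    (∑ S ∈ A.powerset, x ^ S.card) = (x + 1) ^ A.card := by
  classical
  have := Finset.prod_add (fun _ : α => x) (fun _ : α => 1) A
  simp only [Finset.prod_const, one_pow, mul_one] at this
  rw [← this]

theorem total_domination_polynomial_inclusion_exclusion {V : Type*} [Fintype V]
    (G : SimpleGraph V) (x : ℝ) :
    Dt G x = ∑ S : Finset V, (-1 : ℝ) ^ S.card *
      (x + 1) ^ (Fintype.card V - ({v : V | ∃ u ∈ S, G.Adj u v}).ncard) := by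
  classical
  set n := Fintype.card V with hn
  set NS : Finset V → Finset V := fun S => univ.filter (fun v => ∃ u ∈ S, G.Adj u v) with hNS
  have hncard : ∀ S : Finset V, ({v : V | ∃ u ∈ S, G.Adj u v}).ncard = (NS S).card := by
    intro S
    rw [Set.ncard_eq_toFinset_card']
    congr 1
    ext v; simp [hNS]
  -- LHS = sum over total dominating sets
  have hLHS : Dt G x = ∑ D ∈ univ.filter (fun D => IsTotalDomSet G D), x ^ D.card := by
    rw [Dt]
    have hdt : ∀ i, (dt G i : ℝ) * x ^ i
        = ∑ D ∈ (univ.filter (fun D => IsTotalDomSet G D)).filter (fun D => D.card = i),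
            x ^ D.card := by
      intro i
      have h1 : dt G i = ((univ.filter (fun D => IsTotalDomSet G D)).filter
          (fun D => D.card = i)).card := by
        rw [dt, Nat.card_eq_fintype_card, Fintype.card_subtype]
        congr 1
        ext D
        simp [and_comm]
      rw [h1, Finset.sum_congr rfl (fun D hD => ?_), Finset.sum_const, nsmul_eq_mul]
      rw [(Finset.mem_filter.1 hD).2]
    rw [Finset.sum_congr rfl (fun i _ => hdt i)]
    refine Finset.sum_fiberwise_of_maps_to (fun D _ => ?_) _
    rw [Finset.mem_range, Nat.lt_succ_iff]
    exact Finset.card_le_univ D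
  -- RHS
  have hswap : ∀ S D : Finset V, D ⊆ (NS S)ᶜ ↔ S ⊆ (NS D)ᶜ := by
    intro S D
    simp only [Finset.subset_iff, Finset.mem_compl, hNS, Finset.mem_filter, Finset.mem_univ,
      true_and, not_exists, not_and]
    constructor <;> intro h a ha b hb hadj
    · exact h hb a ha hadj.symm
    · exact h hb a ha hadj.symm
  have hpow : ∀ A : Finset V, (univ.filter (fun S => S ⊆ A)) = A.powerset := by
    intro A; ext S; simp
  rw [hLHS]
  symm
  calc ∑ S : Finset V, (-1 : ℝ) ^ S.card *
      (x + 1) ^ (n - ({v : V | ∃ u ∈ S, G.Adj u v}).ncard)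
      = ∑ S : Finset V, ∑ D : Finset V,
          if D ⊆ (NS S)ᶜ then (-1 : ℝ) ^ S.card * x ^ D.card else 0 := by
        refine Finset.sum_congr rfl (fun S _ => ?_)
        rw [hncard, ← Finset.card_compl, ← sum_powerset_pow, Finset.mul_sum]
        rw [← hpow ((NS S)ᶜ), Finset.sum_filter]
    _ = ∑ D : Finset V, ∑ S : Finset V,
          if S ⊆ (NS D)ᶜ then (-1 : ℝ) ^ S.card * x ^ D.card else 0 := by
        rw [Finset.sum_comm]
        exact Finset.sum_congr rfl fun D _ => Finset.sum_congr rfl fun S _ =>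
          if_congr (hswap S D) rfl rfl
    _ = ∑ D : Finset V, (if (NS D)ᶜ = ∅ then 1 else 0) * x ^ D.card := by
        refine Finset.sum_congr rfl (fun D _ => ?_)
        rw [← Finset.sum_filter, hpow, ← sum_powerset_neg_one_real, Finset.sum_mul]
    _ = ∑ D ∈ univ.filter (fun D => IsTotalDomSet G D), x ^ D.card := by
        rw [Finset.sum_filter]
        refine Finset.sum_congr rfl (fun D _ => ?_)
        have : (NS D)ᶜ = ∅ ↔ IsTotalDomSet G D := by
          rw [Finset.compl_eq_empty_iff, Finset.eq_univ_iff_forall]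
          constructor <;> intro h v
          · obtain ⟨u, hu, hadj⟩ := by simpa [hNS] using h v
            exact ⟨u, hu, hadj.symm⟩
          · obtain ⟨u, hu, hadj⟩ := h v
            simp only [hNS, Finset.mem_filter, Finset.mem_univ, true_and]
            exact ⟨u, hu, hadj.symm⟩
        by_cases hD : IsTotalDomSet G D <;> simp [this, hD]
end

section
/- Let G be a graph of order n with minimum degree δ(G) ≥ 2n/3. Then every integer root of the total domination polynomial D_t(G, x) lies in the set {−3, −2, −1, 0}. -/
open Finset

/-!
Inclusion–exclusion over the vertices left undominated gives
`D_t(G, x) = ∑_{T ⊆ V} (-1)^|T| (1 + x)^|V ∖ N(T)|`. A nonempty `T` has `|N(T)| ≥ δ`, so at a root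
with `|1 + x| ≥ 1` the term `(1 + x)^n` of `T = ∅` is at most `(2^n - 1) |1 + x|^(n - δ)`, that is
`|1 + x|^δ ≤ 2^n - 1`. An integer root `x ≤ -4` would give `3^δ < 2^n`, while `2n ≤ 3δ` gives
`2^n ≤ 3^δ`. Positive roots are impossible since `V` itself is total dominating.
-/

open Finset

theorem two_pow_le_three_pow {n d : ℕ} (h : 2 * n ≤ 3 * d) : 2 ^ n ≤ 3 ^ d := by
  refine (Nat.pow_le_pow_iff_left (by norm_num : 3 ≠ 0)).mp ?_
  calc (2 ^ n) ^ 3 = 8 ^ n := by rw [← pow_mul, mul_comm, pow_mul]; norm_num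
    _ ≤ 9 ^ n := Nat.pow_le_pow_left (by norm_num) n
    _ = 3 ^ (2 * n) := by rw [pow_mul]; norm_num
    _ ≤ 3 ^ (3 * d) := Nat.pow_le_pow_right (by norm_num) h
    _ = (3 ^ d) ^ 3 := by rw [← pow_mul, mul_comm]

theorem SimpleGraph.minDegree_le_card {V : Type*} [Fintype V] (G : SimpleGraph V)
    [DecidableRel G.Adj] : G.minDegree ≤ Fintype.card V := by
  cases isEmpty_or_nonempty V
  · simp [minDegree_of_subsingleton]
  · exact G.minDegree_lt_card.le

section TotalDomination

variable {V : Type*} [Fintype V] [DecidableEq V] (G : SimpleGraph V) [DecidableRel G.Adj]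

/-- `D` meets `N(v)` iff `D ⊄ N(v)ᶜ`; this intersection of complements is the shape expected by
`Finset.inclusion_exclusion_sum_inf_compl`. -/
def totalDomSets : Finset (Finset V) :=
  univ.inf fun v => ((G.neighborFinset v)ᶜ.powerset)ᶜ

theorem mem_totalDomSets {D : Finset V} : D ∈ totalDomSets G ↔ IsTotalDomSet G D := by
  simp [totalDomSets, mem_inf, IsTotalDomSet, subset_iff]

theorem dt_eq_card_filter (i : ℕ) : dt G i = #{D ∈ totalDomSets G | #D = i} := by
  classical
  rw [dt, Nat.card_eq_fintype_card, Fintype.card_subtype]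
  congr 1
  ext D
  simp [mem_totalDomSets, and_comm]

theorem Dt_eq_sum_totalDomSets (x : ℝ) : Dt G x = ∑ D ∈ totalDomSets G, x ^ #D := by
  rw [← sum_fiberwise_of_maps_to (g := card) (t := range (Fintype.card V + 1))
    fun D _ => mem_range_succ_iff.mpr (card_le_univ D)]
  refine sum_congr rfl fun i _ => ?_
  rw [sum_congr rfl fun D hD => congrArg (x ^ ·) (mem_filter.mp hD).2, sum_const, nsmul_eq_mul,
    dt_eq_card_filter]

theorem Dt_pos {x : ℝ} (hx : 0 < x) (hG : ∀ v, ∃ u, G.Adj v u) : 0 < Dt G x := by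
  rw [Dt_eq_sum_totalDomSets]
  refine sum_pos' (fun D _ => by positivity) ⟨univ, ?_, by positivity⟩
  exact (mem_totalDomSets G).mpr fun v => (hG v).imp fun u hu => ⟨mem_univ u, hu⟩

def undominatedBy (T : Finset V) : Finset V :=
  (T.sup fun v => G.neighborFinset v)ᶜ

theorem undominatedBy_empty : undominatedBy G ∅ = univ := by
  simp [undominatedBy]

theorem card_undominatedBy_le {T : Finset V} (hT : T.Nonempty) :
    #(undominatedBy G T) ≤ Fintype.card V - G.minDegree := by
  obtain ⟨v, hv⟩ := hT
  have : G.minDegree ≤ #(T.sup fun v => G.neighborFinset v) :=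
    (G.minDegree_le_degree v).trans (card_le_card (le_sup (f := fun v => G.neighborFinset v) hv))
  rw [undominatedBy, card_compl]
  omega

theorem Dt_eq_sum_neg_one_pow (x : ℝ) :
    Dt G x = ∑ T : Finset V, (-1) ^ #T * (1 + x) ^ #(undominatedBy G T) := by
  rw [Dt_eq_sum_totalDomSets, totalDomSets, inclusion_exclusion_sum_inf_compl, powerset_univ]
  refine sum_congr rfl fun T _ => ?_
  have hinf : (T.inf fun v => (G.neighborFinset v)ᶜ.powerset) = (undominatedBy G T).powerset := by
    ext D
    simp [undominatedBy, mem_inf, Finset.compl_sup]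
  rw [hinf, zsmul_eq_mul, add_comm 1 x, ← sum_pow_mul_eq_add_pow x 1]
  simp

theorem abs_one_add_pow_minDegree_le {x : ℝ} (hx : Dt G x = 0) (hx1 : 1 ≤ |1 + x|) :
    |1 + x| ^ G.minDegree ≤ 2 ^ Fintype.card V - 1 := by
  set r := |1 + x|
  set k := Fintype.card V - G.minDegree
  let term (T : Finset V) : ℝ := (-1) ^ #T * (1 + x) ^ #(undominatedBy G T)
  have hterm : ∀ T ∈ univ.erase ∅, |term T| ≤ r ^ k := by
    intro T hT
    rw [abs_mul, abs_pow, abs_pow, abs_neg, abs_one, one_pow, one_mul]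
    exact pow_le_pow_right₀ hx1
      (card_undominatedBy_le G (nonempty_iff_ne_empty.mpr (ne_of_mem_erase hT)))
  rw [Dt_eq_sum_neg_one_pow, ← add_sum_erase _ _ (mem_univ ∅), undominatedBy_empty, card_empty,
    pow_zero, one_mul, card_univ] at hx
  have hsum : r ^ Fintype.card V ≤ (2 ^ Fintype.card V - 1) * r ^ k :=
    calc r ^ Fintype.card V = |∑ T ∈ univ.erase ∅, term T| := by
          rw [← abs_pow, eq_neg_of_add_eq_zero_left hx, abs_neg]
      _ ≤ ∑ T ∈ univ.erase ∅, |term T| := abs_sum_le_sum_abs _ _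
      _ ≤ ∑ T ∈ univ.erase ∅, r ^ k := sum_le_sum hterm
      _ = (2 ^ Fintype.card V - 1) * r ^ k := by
          rw [sum_const, card_erase_of_mem (mem_univ _), card_univ, Fintype.card_finset,
            nsmul_eq_mul, Nat.cast_pred (by positivity)]
          push_cast
          ring
  refine le_of_mul_le_mul_right ?_ (pow_pos (zero_lt_one.trans_le hx1) k)
  rwa [← pow_add, Nat.add_sub_cancel' G.minDegree_le_card]

end TotalDomination

theorem total_domination_integer_roots {V : Type*} [Fintype V]
    (G : SimpleGraph V) [DecidableRel G.Adj]
    (hδ : (2 * Fintype.card V : ℝ) / 3 ≤ G.minDegree)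
    (z : ℤ) (hz : Dt G (z : ℝ) = 0) :
    z ∈ ({-3, -2, -1, 0} : Set ℤ) := by
  classical
  have hdeg : 2 * Fintype.card V ≤ 3 * G.minDegree := by
    rw [div_le_iff₀ (by norm_num)] at hδ
    exact_mod_cast (by linarith : (2 * Fintype.card V : ℝ) ≤ 3 * G.minDegree)
  rcases le_or_gt 1 z with hz1 | hz1
  · refine absurd hz (Dt_pos G (by exact_mod_cast hz1) fun v => ?_).ne'
    have hδ0 : 0 < G.minDegree := by
      have := Fintype.card_pos_iff.mpr ⟨v⟩
      omega
    exact (G.degree_pos_iff_exists_adj v).mp (hδ0.trans_le (G.minDegree_le_degree v))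
  rcases le_or_gt z (-4) with hz4 | hz4
  · have hz4' : (z : ℝ) ≤ -4 := by exact_mod_cast hz4
    have h3 : (3 : ℝ) ≤ |1 + (z : ℝ)| := by
      rw [abs_of_neg (by linarith)]
      linarith
    have hroot := abs_one_add_pow_minDegree_le G hz (by linarith)
    have h23 : (2 : ℝ) ^ Fintype.card V ≤ 3 ^ G.minDegree := by
      exact_mod_cast two_pow_le_three_pow hdeg
    linarith [pow_le_pow_left₀ (by norm_num) h3 G.minDegree]
  · simp only [Set.mem_insert_iff, Set.mem_singleton_iff]
    omega
end

section
/- For all sufficiently large n, the polynomial f(x) = x(1+x)^{2n} + x^{2n} − x (the total domination polynomial of the friendship graph F_n) has a real root in the open interval (−n, −ln n). -/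
/-!
Write `f n x = x (1 + x)^(2n) + x^(2n) - x`. Since the exponent is even,
`f n (-a) = a^(2n) + a - a (a - 1)^(2n)`, so the sign of `f n (-a)` compares
`(a / (a - 1))^(2n)` with `a`. At `a = n` this ratio is at most `e^4`, far below `n`, so
`f n (-n) < 0`; at `a = log n` Bernoulli's inequality makes it at least `1 + 2n / (log n - 1)`,
which exceeds `log n` because `(log n)^2 = o(n)`, so `f n (-log n) > 0`. The intermediate value
theorem gives a root in between.
-/

open Real Filter

/-- The total domination polynomial of the friendship graph `F_n`. -/
def friendshipTotalDomPoly (n : ℕ) (x : ℝ) : ℝ :=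
  x * (1 + x) ^ (2 * n) + x ^ (2 * n) - x

lemma continuous_friendshipTotalDomPoly (n : ℕ) : Continuous (friendshipTotalDomPoly n) := by
  unfold friendshipTotalDomPoly
  fun_prop

lemma friendshipTotalDomPoly_neg (n : ℕ) (a : ℝ) :
    friendshipTotalDomPoly n (-a) = a ^ (2 * n) + a - a * (a - 1) ^ (2 * n) := by
  have hev : Even (2 * n) := even_two_mul n
  rw [friendshipTotalDomPoly, show 1 + -a = -(a - 1) by ring, hev.neg_pow, hev.neg_pow]
  ring

lemma pow_le_sub_one_pow_mul_exp {a : ℝ} (ha : 1 < a) (m : ℕ) :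
    a ^ m ≤ (a - 1) ^ m * exp (m / (a - 1)) := by
  have ha' : 0 < a - 1 := sub_pos.2 ha
  have hstep : a ≤ (a - 1) * exp (1 / (a - 1)) := calc
    a = (a - 1) * (1 / (a - 1) + 1) := by field_simp; ring
    _ ≤ (a - 1) * exp (1 / (a - 1)) := by gcongr; exact add_one_le_exp _
  calc a ^ m ≤ ((a - 1) * exp (1 / (a - 1))) ^ m := by gcongr
    _ = (a - 1) ^ m * exp (m / (a - 1)) := by rw [mul_pow, ← exp_nat_mul, mul_one_div]

lemma pow_add_lt_mul_sub_one_pow {a c : ℝ} {m : ℕ} (hm₀ : 1 ≤ m) (hm : m ≤ c * (a - 1))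
    (ha : exp c + 2 ≤ a) : a ^ m + a < a * (a - 1) ^ m := by
  have ha1 : 1 < a := by linarith [exp_pos c]
  have ha' : 0 < a - 1 := sub_pos.2 ha1
  have hexp : a ^ m ≤ (a - 1) ^ m * exp c := calc
    a ^ m ≤ (a - 1) ^ m * exp (m / (a - 1)) := pow_le_sub_one_pow_mul_exp ha1 m
    _ ≤ (a - 1) ^ m * exp c := by gcongr; rwa [div_le_iff₀ ha']
  have hpow : a - 1 ≤ (a - 1) ^ m := le_self_pow₀ (by linarith [exp_pos c]) (by omega)
  nlinarith [exp_pos c]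

lemma mul_sub_one_pow_lt_pow {b : ℝ} {m : ℕ} (hb : 1 < b) (hm : (b - 1) ^ 2 < m) :
    b * (b - 1) ^ m < b ^ m := by
  have hb' : 0 < b - 1 := sub_pos.2 hb
  have hbern : 1 + m * (1 / (b - 1)) ≤ (1 + 1 / (b - 1)) ^ m :=
    one_add_mul_le_pow (by linarith [one_div_pos.2 hb']) m
  have hlt : b < 1 + m * (1 / (b - 1)) := by
    rw [mul_one_div, ← sub_lt_iff_lt_add', lt_div_iff₀ hb']
    nlinarith
  calc b * (b - 1) ^ m < (1 + m * (1 / (b - 1))) * (b - 1) ^ m := by gcongr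
    _ ≤ (1 + 1 / (b - 1)) ^ m * (b - 1) ^ m := by gcongr
    _ = b ^ m := by rw [← mul_pow]; congr 1; field_simp; ring

lemma eventually_one_lt_log_and_log_sub_one_sq_lt :
    ∀ᶠ n : ℕ in atTop, 1 < log n ∧ (log n - 1) ^ 2 < 2 * n := by
  have hlo := (isLittleO_pow_log_id_atTop (n := 2)).bound (c := 1) one_pos
  have hreal : ∀ᶠ x : ℝ in atTop, 1 < log x ∧ (log x - 1) ^ 2 < 2 * x := by
    filter_upwards [hlo, tendsto_log_atTop.eventually_gt_atTop 1, eventually_gt_atTop 0]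
      with x hx hlog hx0
    simp only [norm_pow, Real.norm_eq_abs, sq_abs, id, abs_of_pos hx0, one_mul] at hx
    exact ⟨hlog, by nlinarith⟩
  exact tendsto_natCast_atTop_atTop.eventually hreal

theorem friendship_polynomial_real_root_interval :
    ∃ N : ℕ, ∀ n : ℕ, N ≤ n →
      ∃ x : ℝ, -(n : ℝ) < x ∧ x < -Real.log n ∧
        x * (1 + x) ^ (2 * n) + x ^ (2 * n) - x = 0 := by
  obtain ⟨N, hN⟩ := eventually_atTop.1 <| eventually_one_lt_log_and_log_sub_one_sq_lt.and
    (tendsto_natCast_atTop_atTop.eventually_ge_atTop (exp 4 + 2))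
  refine ⟨N, fun n hn => ?_⟩
  obtain ⟨⟨hlog, hsq⟩, hlarge⟩ := hN n hn
  have hn2 : (2 : ℝ) ≤ n := by linarith [exp_pos 4]
  have hleft : friendshipTotalDomPoly n (-n) < 0 := by
    rw [friendshipTotalDomPoly_neg, sub_neg]
    refine pow_add_lt_mul_sub_one_pow (c := 4) ?_ ?_ hlarge
    · have : 1 ≤ n := by exact_mod_cast (by linarith : (1 : ℝ) ≤ n)
      omega
    · push_cast; linarith
  have hright : 0 < friendshipTotalDomPoly n (-log n) := by
    rw [friendshipTotalDomPoly_neg]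
    have := mul_sub_one_pow_lt_pow hlog (m := 2 * n) (by exact_mod_cast hsq)
    linarith
  have hlt : -(n : ℝ) < -log n := by
    linarith [log_le_sub_one_of_pos (by linarith : (0 : ℝ) < n)]
  obtain ⟨x, hx, hfx⟩ := intermediate_value_Ioo hlt.le
    (continuous_friendshipTotalDomPoly n).continuousOn ⟨hleft, hright⟩
  exact ⟨x, hx.1, hx.2, hfx⟩
end
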